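/- Let P be a relational program such that for every q : Q and r : R q the set of atoms S q r is finite. Then the least model of P (with respect to ≼) exists and equals the pointwise union ⨆_{n ∈ ℕ} T_P^n(⊥) of the iterates of T_P starting from the bottom interpretation ⊥ (whose q-component is the empty set). -/

import Mathlib

/-- An interpretation: for each predicate symbol `q` of arity `a q`,
a set of tuples of type `Fin (a q) → D`. -/
abbrev Interp (D Q : Type*) (a : Q → ℕ) : Type _ :=
  (q : Q) → Set (Fin (a q) → D)

/-- An atom over a variable type `V`: a predicate symbol `p` together with the
interpretation-independent evaluation `σ` of its argument terms under an assignment. -/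
structure Atom (D Q : Type*) (a : Q → ℕ) (V : Type*) where
  p : Q
  σ : (V → D) → (Fin (a p) → D)

/-- The atom is satisfied by `I` with assignment `α` iff `σ α ∈ I p`. -/
def Atom.SatisfiedBy {D Q : Type*} {a : Q → ℕ} {V : Type*}
    (A : Atom D Q a V) (I : Interp D Q a) (α : V → D) : Prop :=
  A.σ α ∈ I A.p

/-- A relational program: for each predicate symbol `q`, an index type `R q` of
disjuncts, and for each disjunct a type of existential variables and a set of atoms. -/
structure Program (D Q : Type*) (a : Q → ℕ) where
  R : Q → Type*
  E : (q : Q) → R q → Type*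
  S : (q : Q) → (r : R q) → Set (Atom D Q a (Fin (a q) ⊕ E q r))

/-- The body of `q` is satisfied by `I` with `t` iff some disjunct has all its
atoms satisfied for some valuation `β` of the existential variables. -/
def Program.BodySat {D Q : Type*} {a : Q → ℕ} (P : Program D Q a)
    (I : Interp D Q a) (q : Q) (t : Fin (a q) → D) : Prop :=
  ∃ (r : P.R q) (β : P.E q r → D), ∀ A ∈ P.S q r, A.SatisfiedBy I (Sum.elim t β)

/-- `I` is a model of `P` iff for all `q` and `t`, satisfaction of the body
of `q` with `t` implies `t ∈ I q`. -/
def Program.IsModel {D Q : Type*} {a : Q → ℕ} (P : Program D Q a)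
    (I : Interp D Q a) : Prop :=
  ∀ q t, P.BodySat I q t → t ∈ I q

/-- The operator `T_P`. -/
def Program.T {D Q : Type*} {a : Q → ℕ} (P : Program D Q a)
    (I : Interp D Q a) : Interp D Q a :=
  fun q => { t | P.BodySat I q t }

/-! Models of `P` are exactly the prefixed points of `T_P`, so the least model is the least fixed
point of `T_P`. When every disjunct has finitely many atoms, `T_P` is Scott continuous: a finite
set of atoms satisfied in the union of a directed family of interpretations is already satisfied
in a single member. Kleene's fixed point theorem then identifies the least fixed point with the
union of the iterates `T_P^n(⊥)`. -/

namespace Program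

variable {D Q : Type*} {a : Q → ℕ} (P : Program D Q a)

theorem monotone_T : Monotone P.T :=
  fun _ _ hIJ _ _ ⟨r, β, hβ⟩ => ⟨r, β, fun A hA => hIJ A.p (hβ A hA)⟩

theorem isModel_iff_T_le {I : Interp D Q a} : P.IsModel I ↔ P.T I ≤ I := Iff.rfl

theorem exists_bodySat_of_bodySat_sSup {q : Q} (hfin : ∀ r, (P.S q r).Finite)
    {d : Set (Interp D Q a)} (hne : d.Nonempty) (hd : DirectedOn (· ≤ ·) d)
    {t : Fin (a q) → D} (h : P.BodySat (sSup d) q t) : ∃ I ∈ d, P.BodySat I q t := by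
  obtain ⟨r, β, hβ⟩ := h
  have witness : ∀ A ∈ P.S q r, ∃ I : d, A.SatisfiedBy I (Sum.elim t β) := fun A hA => by
    simpa [Atom.SatisfiedBy] using hβ A hA
  have := hne.to_subtype
  choose! I hI using witness
  obtain ⟨J, hJ⟩ := hd.directed_val.finite_set_le ((hfin r).image I)
  exact ⟨J, J.2, r, β, fun A hA => hJ _ ⟨A, hA, rfl⟩ A.p (hI A hA)⟩

theorem scottContinuous_T (hfin : ∀ q r, (P.S q r).Finite) : ScottContinuous P.T := by
  intro d hne hd I hI
  refine ⟨P.monotone_T.mem_upperBounds_image hI.1, fun J hJ q t ht => ?_⟩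
  rw [hI.unique hd.isLUB_sSup] at ht
  obtain ⟨K, hK, hbody⟩ := P.exists_bodySat_of_bodySat_sSup (hfin q) hne hd ht
  exact hJ ⟨K, hK, rfl⟩ q hbody

theorem iUnion_iterate_T_eq_lfp (hfin : ∀ q r, (P.S q r).Finite) (q : Q) :
    ⋃ n : ℕ, (P.T^[n] (fun _ => ∅)) q = OrderHom.lfp ⟨P.T, P.monotone_T⟩ q := by
  -- `.ωScottContinuous` would pick the pointwise ωCPO instance on `Interp`, not the one that
  -- `lfp_eq_sSup_iterate` is stated for; both unfold to this `ScottContinuousOn`.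
  rw [fixedPoints.lfp_eq_sSup_iterate ⟨P.T, P.monotone_T⟩
    (P.scottContinuous_T hfin).scottContinuousOn]
  exact iSup_apply.symm

end Program

/-- Theorem 6: for a relational program with finite conjunctions, the least model
exists and equals the pointwise union of the iterates of `T_P` from bottom. -/
theorem least_model_eq_iSup_iterates {D Q : Type*} {a : Q → ℕ} (P : Program D Q a)
    (hfin : ∀ (q : Q) (r : P.R q), (P.S q r).Finite) :
    P.IsModel (fun q => ⋃ n : ℕ, (P.T^[n] (fun _ => ∅)) q) ∧
      ∀ I : Interp D Q a, P.IsModel I →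
        ∀ q, (⋃ n : ℕ, (P.T^[n] (fun _ => ∅)) q) ⊆ I q := by
  let T : Interp D Q a →o Interp D Q a := ⟨P.T, P.monotone_T⟩
  simp only [P.iUnion_iterate_T_eq_lfp hfin]
  exact ⟨P.isModel_iff_T_le.2 T.map_lfp.le, fun I hI => T.lfp_le hI⟩
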